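/- If Y_1,...,Y_N are mutually conditionally independent given X, then for any subsets A, B ⊆ {1,...,N}, I(X; Y_A) + I(X; Y_B) ≥ I(X; Y_{A∪B}) + I(X; Y_{A∩B}). -/

import Mathlib

open Finset

/-- A probability distribution on a finite sample space, given by weights. -/
structure DiscProb (Ω : Type) [Fintype Ω] where
  w : Ω → ℝ
  nonneg : ∀ ω, 0 ≤ w ω
  sum_one : ∑ ω, w ω = 1

namespace DiscProb

variable {Ω : Type} [Fintype Ω]

/-- Probability that the discrete random variable `X` takes the value `a`. -/
noncomputable def prob (μ : DiscProb Ω) {α : Type} [DecidableEq α]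
    (X : Ω → α) (a : α) : ℝ :=
  ∑ ω ∈ Finset.univ.filter (fun ω => X ω = a), μ.w ω

/-- Shannon entropy of a discrete random variable. -/
noncomputable def entropy (μ : DiscProb Ω) {α : Type} [Fintype α] [DecidableEq α]
    (X : Ω → α) : ℝ :=
  -∑ a : α, μ.prob X a * Real.log (μ.prob X a)

/-- Conditional Shannon entropy `H(X | Y) = H(X, Y) - H(Y)`. -/
noncomputable def condEntropy (μ : DiscProb Ω) {α β : Type}
    [Fintype α] [DecidableEq α] [Fintype β] [DecidableEq β]
    (X : Ω → α) (Y : Ω → β) : ℝ :=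
  μ.entropy (fun ω => (X ω, Y ω)) - μ.entropy Y

/-- Mutual information `I(X ; Y) = H(X) + H(Y) - H(X, Y)`. -/
noncomputable def mutualInfo (μ : DiscProb Ω) {α β : Type}
    [Fintype α] [DecidableEq α] [Fintype β] [DecidableEq β]
    (X : Ω → α) (Y : Ω → β) : ℝ :=
  μ.entropy X + μ.entropy Y - μ.entropy (fun ω => (X ω, Y ω))

/-- Conditional mutual information
`I(X ; Y | Z) = H(X,Z) + H(Y,Z) - H(X,Y,Z) - H(Z)`. -/
noncomputable def condMutualInfo (μ : DiscProb Ω) {α β γ : Type}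
    [Fintype α] [DecidableEq α] [Fintype β] [DecidableEq β]
    [Fintype γ] [DecidableEq γ]
    (X : Ω → α) (Y : Ω → β) (Z : Ω → γ) : ℝ :=
  μ.entropy (fun ω => (X ω, Z ω)) + μ.entropy (fun ω => (Y ω, Z ω))
    - μ.entropy (fun ω => (X ω, Y ω, Z ω)) - μ.entropy Z

end DiscProb

/-- The joint random variable `Y_A = (Y_i)_{i ∈ A}` of a family of random variables. -/
def jointObs {Ω ι : Type} {𝒪 : ι → Type} (Y : ∀ i, Ω → 𝒪 i) (A : Finset ι) :
    Ω → ((i : A) → 𝒪 i.1) := fun ω i => Y i.1 ω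

/-- The random variables `Y_i, i ∈ ι` are mutually conditionally independent given `X`:
for every finite subset `A`, `P(Y_A = y | X = x) = ∏_{i ∈ A} P(Y_i = y_i | X = x)`,
written in a division-free form. -/
def iCondIndepGiven {Ω : Type} [Fintype Ω] {α ι : Type} [DecidableEq α]
    {𝒪 : ι → Type} [∀ i, DecidableEq (𝒪 i)] (μ : DiscProb Ω)
    (X : Ω → α) (Y : ∀ i, Ω → 𝒪 i) : Prop :=
  ∀ (A : Finset ι) (y : (i : A) → 𝒪 i.1) (x : α),
    μ.prob (fun ω => (jointObs Y A ω, X ω)) (y, x) * (μ.prob X x) ^ A.card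
      = μ.prob X x * ∏ i : A, μ.prob (fun ω => (Y i.1 ω, X ω)) (y i, x)

/-- `Y₁` and `Y₂` are conditionally independent given `X`:
`P(Y₁ = y₁, Y₂ = y₂ | X = x) = P(Y₁ = y₁ | X = x) ⬝ P(Y₂ = y₂ | X = x)`,
written in a division-free form. -/
def pairCondIndepGiven {Ω : Type} [Fintype Ω] {α β γ : Type}
    [DecidableEq α] [DecidableEq β] [DecidableEq γ] (μ : DiscProb Ω)
    (Y₁ : Ω → β) (Y₂ : Ω → γ) (X : Ω → α) : Prop :=
  ∀ (y₁ : β) (y₂ : γ) (x : α),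
    μ.prob (fun ω => (Y₁ ω, Y₂ ω, X ω)) (y₁, y₂, x) * μ.prob X x
      = μ.prob (fun ω => (Y₁ ω, X ω)) (y₁, x) * μ.prob (fun ω => (Y₂ ω, X ω)) (y₂, x)

variable {Ω α : Type} [Fintype Ω] [Fintype α] [DecidableEq α]
  {N : ℕ} {𝒪 : Fin N → Type} [∀ i, Fintype (𝒪 i)] [∀ i, DecidableEq (𝒪 i)]

/-!
Under conditional independence, wherever `P(Y_S = y, X = x) > 0`,
`log P(Y_S = y, X = x) = (1 - |S|) log P(X = x) + ∑_{i ∈ S} log P(Y_i = y_i, X = x)`,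
so `H(Y_S, X)` is a modular function of `S`. Hence `I(X ; Y_S) = H(X) + H(Y_S) - H(Y_S, X)`
is submodular because `S ↦ H(Y_S)` is, which is Shannon's inequality
`I(Y_S ; Y_T | Y_{S ∩ T}) ≥ 0`, a consequence of Gibbs' inequality.
-/

lemma mul_log_sub_mul_log_le {a q : ℝ} (ha : 0 ≤ a) (hq : 0 ≤ q) (haq : 0 < a → 0 < q) :
    a * Real.log q - a * Real.log a ≤ q - a := by
  rcases ha.eq_or_lt with rfl | ha
  · simpa using hq
  have hq := haq ha
  calc a * Real.log q - a * Real.log a = a * Real.log (q / a) := by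
        rw [Real.log_div hq.ne' ha.ne']; ring
    _ ≤ a * (q / a - 1) :=
        mul_le_mul_of_nonneg_left (Real.log_le_sub_one_of_pos (by positivity)) ha.le
    _ = q - a := by field_simp

lemma sum_mul_log_le_sum_mul_log {ι : Type*} (s : Finset ι) {p q : ι → ℝ}
    (hp : ∀ i ∈ s, 0 ≤ p i) (hq : ∀ i ∈ s, 0 ≤ q i) (hpq : ∀ i ∈ s, 0 < p i → 0 < q i)
    (hsum : ∑ i ∈ s, q i ≤ ∑ i ∈ s, p i) :
    ∑ i ∈ s, p i * Real.log (q i) ≤ ∑ i ∈ s, p i * Real.log (p i) := by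
  have := sum_le_sum fun i hi => mul_log_sub_mul_log_le (hp i hi) (hq i hi) (hpq i hi)
  rw [sum_sub_distrib, sum_sub_distrib] at this
  linarith

namespace DiscProb

variable (μ : DiscProb Ω)

section

variable {β γ δ : Type} [DecidableEq β] [DecidableEq γ] [DecidableEq δ]

lemma prob_nonneg (f : Ω → β) (b : β) : 0 ≤ μ.prob f b :=
  sum_nonneg fun ω _ => μ.nonneg ω

lemma prob_le_prob_comp (f : Ω → β) (g : β → γ) (b : β) :
    μ.prob f b ≤ μ.prob (fun ω => g (f ω)) (g b) :=
  sum_le_sum_of_subset_of_nonneg (monotone_filter_right _ fun _ _ h => congrArg g h)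
    fun ω _ _ => μ.nonneg ω

lemma prob_comp_of_injective (f : Ω → β) {g : β → γ} (hg : Function.Injective g) (b : β) :
    μ.prob (fun ω => g (f ω)) (g b) = μ.prob f b := by
  simp only [prob, hg.eq_iff]

lemma sum_prob_mul [Fintype β] (f : Ω → β) (φ : β → ℝ) :
    ∑ b, μ.prob f b * φ b = ∑ ω, μ.w ω * φ (f ω) := by
  rw [← sum_fiberwise univ f fun ω => μ.w ω * φ (f ω)]
  refine sum_congr rfl fun b _ => ?_
  rw [prob, sum_mul]
  exact sum_congr rfl fun ω hω => by rw [(mem_filter.1 hω).2]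

lemma sum_prob [Fintype β] (f : Ω → β) : ∑ b, μ.prob f b = 1 := by
  simpa [μ.sum_one] using μ.sum_prob_mul f 1

lemma sum_prob_prod_mk_left [Fintype β] (f : Ω → β) (g : Ω → γ) (c : γ) :
    ∑ b, μ.prob (fun ω => (f ω, g ω)) (b, c) = μ.prob g c := by
  rw [prob, ← sum_fiberwise _ f]
  refine sum_congr rfl fun b _ => ?_
  rw [prob, filter_filter]
  simp only [Prod.mk.injEq, and_comm]

lemma sum_prob_mul_comp [Fintype β] [Fintype γ] (f : Ω → β) (g : β → γ) (φ : γ → ℝ) :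
    ∑ b, μ.prob f b * φ (g b) = ∑ c, μ.prob (fun ω => g (f ω)) c * φ c := by
  rw [sum_prob_mul, sum_prob_mul]

lemma sum_prob_mul_log_prob_comp [Fintype β] [Fintype γ] (f : Ω → β) (g : β → γ) :
    ∑ b, μ.prob f b * Real.log (μ.prob (fun ω => g (f ω)) (g b))
      = -μ.entropy (fun ω => g (f ω)) := by
  rw [entropy, neg_neg]
  exact μ.sum_prob_mul_comp f g fun c => Real.log (μ.prob (fun ω => g (f ω)) c)

lemma entropy_comp_of_injective [Fintype β] [Fintype γ] (f : Ω → β) {g : β → γ}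
    (hg : Function.Injective g) : μ.entropy (fun ω => g (f ω)) = μ.entropy f := by
  rw [← neg_neg (μ.entropy (fun ω => g (f ω))), ← sum_prob_mul_log_prob_comp, entropy]
  simp only [μ.prob_comp_of_injective f hg]

lemma entropy_prod_comm [Fintype β] [Fintype γ] (f : Ω → β) (g : Ω → γ) :
    μ.entropy (fun ω => (f ω, g ω)) = μ.entropy (fun ω => (g ω, f ω)) :=
  (μ.entropy_comp_of_injective (g := Prod.swap) (fun ω => (f ω, g ω)) Prod.swap_injective).symm

end

section

variable {β γ δ : Type} [Fintype β] [DecidableEq β] [Fintype γ] [DecidableEq γ]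
  [Fintype δ] [DecidableEq δ]

lemma sum_prob_mul_prob_div_prob (U : Ω → β) (V : Ω → γ) (W : Ω → δ) :
    ∑ t : β × γ × δ, μ.prob (fun ω => (U ω, W ω)) (t.1, t.2.2)
      * μ.prob (fun ω => (V ω, W ω)) t.2 / μ.prob W t.2.2 = 1 := by
  rw [← μ.sum_prob W, Fintype.sum_prod_type_right, Fintype.sum_prod_type_right]
  refine sum_congr rfl fun w _ => ?_
  calc _ = (∑ u, μ.prob (fun ω => (U ω, W ω)) (u, w))
        * (∑ v, μ.prob (fun ω => (V ω, W ω)) (v, w)) / μ.prob W w := by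
        rw [sum_mul_sum, sum_div, sum_comm]
        simp only [sum_div]
    _ = μ.prob W w := by
        rw [μ.sum_prob_prod_mk_left, μ.sum_prob_prod_mk_left, mul_self_div_self]

lemma condMutualInfo_nonneg (U : Ω → β) (V : Ω → γ) (W : Ω → δ) :
    0 ≤ μ.condMutualInfo U V W := by
  set T : Ω → β × γ × δ := fun ω => (U ω, V ω, W ω)
  set P := μ.prob T
  set pUW := μ.prob (fun ω => (U ω, W ω))
  set pVW := μ.prob (fun ω => (V ω, W ω))
  set pW := μ.prob W
  have hpos : ∀ t, 0 < P t → 0 < pUW (t.1, t.2.2) ∧ 0 < pVW t.2 ∧ 0 < pW t.2.2 := fun t ht =>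
    ⟨ht.trans_le (μ.prob_le_prob_comp T (fun t => (t.1, t.2.2)) t),
      ht.trans_le (μ.prob_le_prob_comp T Prod.snd t),
      ht.trans_le (μ.prob_le_prob_comp T (fun t => t.2.2) t)⟩
  have hlog : ∀ t, P t * Real.log (pUW (t.1, t.2.2) * pVW t.2 / pW t.2.2)
      = P t * Real.log (pUW (t.1, t.2.2)) + P t * Real.log (pVW t.2)
        - P t * Real.log (pW t.2.2) := fun t => by
    rcases (μ.prob_nonneg T t).eq_or_lt with h | h
    · simp [P, ← h]
    obtain ⟨h₁, h₂, h₃⟩ := hpos t h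
    rw [Real.log_div (by positivity) h₃.ne', Real.log_mul h₁.ne' h₂.ne']
    ring
  -- Gibbs against `P(u, w) P(v, w) / P(w)`, the law making `U`, `V` independent given `W`.
  have hGibbs := sum_mul_log_le_sum_mul_log univ (p := P)
    (q := fun t => pUW (t.1, t.2.2) * pVW t.2 / pW t.2.2) (fun t _ => μ.prob_nonneg T t)
    (fun t _ => div_nonneg (mul_nonneg (μ.prob_nonneg _ _) (μ.prob_nonneg _ _))
      (μ.prob_nonneg _ _))
    (fun t _ ht => by obtain ⟨h₁, h₂, h₃⟩ := hpos t ht; positivity)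
    (by rw [μ.sum_prob_mul_prob_div_prob U V W, μ.sum_prob T])
  have hUW : ∑ t, P t * Real.log (pUW (t.1, t.2.2)) = -μ.entropy (fun ω => (U ω, W ω)) :=
    μ.sum_prob_mul_log_prob_comp T fun t => (t.1, t.2.2)
  have hVW : ∑ t, P t * Real.log (pVW t.2) = -μ.entropy (fun ω => (V ω, W ω)) :=
    μ.sum_prob_mul_log_prob_comp T Prod.snd
  have hW : ∑ t, P t * Real.log (pW t.2.2) = -μ.entropy W :=
    μ.sum_prob_mul_log_prob_comp T fun t => t.2.2
  have hT : ∑ t, P t * Real.log (P t) = -μ.entropy (fun ω => (U ω, V ω, W ω)) :=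
    (neg_neg _).symm
  simp only [hlog, sum_sub_distrib, sum_add_distrib, hUW, hVW, hW, hT] at hGibbs
  rw [condMutualInfo]
  linarith

lemma entropy_prod_add_entropy_le_of_comp_eq (U : Ω → β) (V : Ω → γ) {g : β → δ} {h : γ → δ}
    (hgh : ∀ ω, g (U ω) = h (V ω)) :
    μ.entropy (fun ω => (U ω, V ω)) + μ.entropy (fun ω => g (U ω))
      ≤ μ.entropy U + μ.entropy V := by
  have hUV : μ.entropy (fun ω => (U ω, V ω, g (U ω))) = μ.entropy (fun ω => (U ω, V ω)) :=
    μ.entropy_comp_of_injective (g := fun p => (p.1, p.2, g p.1)) (fun ω => (U ω, V ω))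
      fun p q hpq => Prod.ext (congrArg (·.1) hpq) (congrArg (·.2.1) hpq)
  have hU : μ.entropy (fun ω => (U ω, g (U ω))) = μ.entropy U :=
    μ.entropy_comp_of_injective (g := fun u => (u, g u)) U fun _ _ h => congrArg Prod.fst h
  have hV : μ.entropy (fun ω => (V ω, g (U ω))) = μ.entropy V := by
    simp only [hgh]
    exact μ.entropy_comp_of_injective (g := fun v => (v, h v)) V fun _ _ h => congrArg Prod.fst h
  have := μ.condMutualInfo_nonneg U V fun ω => g (U ω)
  rw [condMutualInfo, hUV, hU, hV] at this
  linarith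

end

section

variable {ι : Type} [DecidableEq ι] {𝒪 : ι → Type} [∀ i, Fintype (𝒪 i)] [∀ i, DecidableEq (𝒪 i)]

lemma entropy_jointObs_prod (Y : ∀ i, Ω → 𝒪 i) (S T : Finset ι) :
    μ.entropy (fun ω => (jointObs Y S ω, jointObs Y T ω)) = μ.entropy (jointObs Y (S ∪ T)) := by
  refine μ.entropy_comp_of_injective (jointObs Y (S ∪ T))
    (g := fun y => (restrict₂ subset_union_left y, restrict₂ subset_union_right y)) ?_
  intro y y' h
  funext ⟨i, hi⟩
  rcases mem_union.1 hi with hi | hi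
  · exact congrFun (congrArg Prod.fst h) ⟨i, hi⟩
  · exact congrFun (congrArg Prod.snd h) ⟨i, hi⟩

lemma entropy_jointObs_union_add_inter_le (Y : ∀ i, Ω → 𝒪 i) (S T : Finset ι) :
    μ.entropy (jointObs Y (S ∪ T)) + μ.entropy (jointObs Y (S ∩ T))
      ≤ μ.entropy (jointObs Y S) + μ.entropy (jointObs Y T) := by
  rw [← entropy_jointObs_prod]
  exact μ.entropy_prod_add_entropy_le_of_comp_eq _ _
    (g := restrict₂ inter_subset_left) (h := restrict₂ inter_subset_right) fun _ => rfl

end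

lemma log_prob_jointObs_prod_of_iCondIndepGiven {α ι : Type} [DecidableEq α] {𝒪 : ι → Type}
    [∀ i, DecidableEq (𝒪 i)] {X : Ω → α} {Y : ∀ i, Ω → 𝒪 i} (hCI : iCondIndepGiven μ X Y)
    {S : Finset ι} {y : (i : S) → 𝒪 i.1} {x : α}
    (hpos : 0 < μ.prob (fun ω => (jointObs Y S ω, X ω)) (y, x)) :
    Real.log (μ.prob (fun ω => (jointObs Y S ω, X ω)) (y, x))
      = (1 - #S) * Real.log (μ.prob X x)
        + ∑ i : S, Real.log (μ.prob (fun ω => (Y i.1 ω, X ω)) (y i, x)) := by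
  have hX : 0 < μ.prob X x := hpos.trans_le (μ.prob_le_prob_comp _ Prod.snd (y, x))
  have hY : ∀ i : S, 0 < μ.prob (fun ω => (Y i.1 ω, X ω)) (y i, x) := fun i =>
    hpos.trans_le (μ.prob_le_prob_comp _ (fun z => (z.1 i, z.2)) (y, x))
  have h := congrArg Real.log (hCI S y x)
  rw [Real.log_mul hpos.ne' (pow_ne_zero _ hX.ne'), Real.log_pow,
    Real.log_mul hX.ne' (prod_ne_zero_iff.2 fun i _ => (hY i).ne'),
    Real.log_prod fun i _ => (hY i).ne'] at h
  linarith

section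

variable {ι : Type} [DecidableEq ι] {𝒪 : ι → Type} [∀ i, Fintype (𝒪 i)]
  [∀ i, DecidableEq (𝒪 i)] {X : Ω → α} {Y : ∀ i, Ω → 𝒪 i}

lemma entropy_jointObs_prod_of_iCondIndepGiven (hCI : iCondIndepGiven μ X Y) (S : Finset ι) :
    μ.entropy (fun ω => (jointObs Y S ω, X ω))
      = (1 - #S) * μ.entropy X + ∑ i ∈ S, μ.entropy (fun ω => (Y i ω, X ω)) := by
  set q := μ.prob (fun ω => (jointObs Y S ω, X ω))
  have hpt : ∀ z, q z * Real.log (q z) = (1 - #S) * (q z * Real.log (μ.prob X z.2))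
      + ∑ i : S, q z * Real.log (μ.prob (fun ω => (Y i.1 ω, X ω)) (z.1 i, z.2)) := by
    rintro ⟨y, x⟩
    rcases (μ.prob_nonneg (fun ω => (jointObs Y S ω, X ω)) (y, x)).eq_or_lt with h | h
    · simp [q, ← h]
    rw [μ.log_prob_jointObs_prod_of_iCondIndepGiven hCI h, mul_add, mul_sum]
    ring
  have hX : ∑ z, q z * Real.log (μ.prob X z.2) = -μ.entropy X :=
    μ.sum_prob_mul_log_prob_comp (fun ω => (jointObs Y S ω, X ω)) Prod.snd
  have hY : ∀ i : S, ∑ z, q z * Real.log (μ.prob (fun ω => (Y i.1 ω, X ω)) (z.1 i, z.2))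
      = -μ.entropy (fun ω => (Y i ω, X ω)) := fun i =>
    μ.sum_prob_mul_log_prob_comp (fun ω => (jointObs Y S ω, X ω)) fun z => (z.1 i, z.2)
  rw [entropy, sum_congr rfl fun z _ => hpt z, sum_add_distrib, ← mul_sum, sum_comm, hX,
    sum_congr rfl fun i _ => hY i, sum_coe_sort S fun i => -μ.entropy (fun ω => (Y i ω, X ω)),
    sum_neg_distrib]
  ring

lemma mutualInfo_jointObs_of_iCondIndepGiven (hCI : iCondIndepGiven μ X Y) (S : Finset ι) :
    μ.mutualInfo X (jointObs Y S)
      = μ.entropy (jointObs Y S) + #S * μ.entropy X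
        - ∑ i ∈ S, μ.entropy (fun ω => (Y i ω, X ω)) := by
  rw [mutualInfo, entropy_prod_comm, μ.entropy_jointObs_prod_of_iCondIndepGiven hCI]
  ring

end

end DiscProb

/-- under mutual conditional independence of the `Y_i` given `X`,
`I(X ; Y_A) + I(X ; Y_B) ≥ I(X ; Y_{A ∪ B}) + I(X ; Y_{A ∩ B})`. -/
theorem mutualInfo_submodular_lattice
    (μ : DiscProb Ω) (X : Ω → α) (Y : ∀ i, Ω → 𝒪 i)
    (hCI : iCondIndepGiven μ X Y) (A B : Finset (Fin N)) :
    μ.mutualInfo X (jointObs Y (A ∪ B)) + μ.mutualInfo X (jointObs Y (A ∩ B))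
      ≤ μ.mutualInfo X (jointObs Y A) + μ.mutualInfo X (jointObs Y B) := by
  have hH := μ.entropy_jointObs_union_add_inter_le Y A B
  have hcard : (#(A ∪ B) : ℝ) + #(A ∩ B) = #A + #B := by
    exact_mod_cast card_union_add_card_inter A B
  have hsum := sum_union_inter (s₁ := A) (s₂ := B) (f := fun i => μ.entropy (fun ω => (Y i ω, X ω)))
  simp only [μ.mutualInfo_jointObs_of_iCondIndepGiven hCI]
  linear_combination hH + μ.entropy X * hcard - hsum
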